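/- Let (X,d_X) be a starry metric space, (Y,d_Y) a doubling metric space, α ∈ (0,1], and Ψ : (0,∞) → (0,∞) an increasing function. Then no injection φ : X → Y can satisfy d_Y(φ(x),φ(y))/d_Y(φ(x),φ(z)) ≤ Ψ(d_X(x,y)^α / d_X(x,z)^α) for all triples of distinct points x,y,z ∈ X. In particular, snowflaking the metric of a starry space does not permit a quasisymmetric embedding into a doubling space. -/
import Mathlib


open Metric Set

/-- A metric space contains an `(A,η)`-approximate `n`-star. -/
def HasApproxStar (X : Type*) [PseudoMetricSpace X] (A η : ℝ) (n : ℕ) : Prop :=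
  ∃ ρ : ℝ, 0 < ρ ∧ ∃ x : Fin (n + 1) → X,
    (∀ i j : Fin (n + 1), i ≠ 0 → j ≠ 0 → i ≠ j →
      (A - η) * ρ ≤ dist (x i) (x j) ∧ dist (x i) (x j) ≤ A * ρ) ∧
    (∀ i : Fin (n + 1), i ≠ 0 → ρ ≤ dist (x 0) (x i) ∧ dist (x 0) (x i) ≤ (1 + η) * ρ)

/-- A metric space is starry if there are uniform `A > 1` and `0 < η < (A-1)/2` such that for
every `n` the space contains an `(Aₙ,η)`-approximate `n`-star for some `Aₙ ≥ A`. -/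
def Starry (X : Type*) [PseudoMetricSpace X] : Prop :=
  ∃ A η : ℝ, 1 < A ∧ 0 < η ∧ η < (A - 1) / 2 ∧
    ∀ n : ℕ, ∃ An : ℝ, A ≤ An ∧ HasApproxStar X An η n

/-- `Ψ` is an increasing function `(0,∞) → (0,∞)`. -/
def IncreasingOnPos (Ψ : ℝ → ℝ) : Prop :=
  (∀ t : ℝ, 0 < t → 0 < Ψ t) ∧ StrictMonoOn Ψ (Set.Ioi 0)

/-- A map `φ` is `Ψ`-quasisymmetric. -/
def IsQuasisymmetric {X Y : Type*} [PseudoMetricSpace X] [PseudoMetricSpace Y]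
    (φ : X → Y) (Ψ : ℝ → ℝ) : Prop :=
  ∀ x y z : X, x ≠ y → x ≠ z → y ≠ z →
    dist (φ x) (φ y) / dist (φ x) (φ z) ≤ Ψ (dist x y / dist x z)

/-- A metric space is doubling: there is `K > 0` such that every closed ball `B(x,r)` can be
covered by at most `K` closed balls of radius `r/2`. -/
def DoublingSpace (X : Type*) [PseudoMetricSpace X] : Prop :=
  ∃ K : ℕ, 0 < K ∧ ∀ (x : X) (r : ℝ), 0 < r →
    ∃ s : Finset X, s.card ≤ K ∧ closedBall x r ⊆ ⋃ y ∈ s, closedBall y (r / 2)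

/-- If `X` is starry, `Y` is doubling, `α ∈ (0,1]` and `Ψ : (0,∞) → (0,∞)` is
increasing, then no injection `φ : X → Y` satisfies
`d(φx,φy)/d(φx,φz) ≤ Ψ(d(x,y)^α / d(x,z)^α)` for all triples of distinct points;
in particular snowflaking the metric does not permit a quasisymmetric embedding. -/

lemma my_doubling_iterate {Y : Type*} [PseudoMetricSpace Y] (K : ℕ)
    (h : ∀ (x : Y) (r : ℝ), 0 < r →
      ∃ s : Finset Y, s.card ≤ K ∧ closedBall x r ⊆ ⋃ y ∈ s, closedBall y (r / 2)) :
    ∀ (m : ℕ) (x : Y) (r : ℝ), 0 < r →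
      ∃ s : Finset Y, s.card ≤ K ^ m ∧ closedBall x r ⊆ ⋃ y ∈ s, closedBall y (r / 2 ^ m) := by
  intro m
  induction m with
  | zero =>
    intro x r hr
    exact ⟨{x}, by simp, by simp⟩
  | succ m ih =>
    classical
    intro x r hr
    obtain ⟨s, hs, hcov⟩ := ih x r hr
    have hrm : (0:ℝ) < r / 2 ^ m := by positivity
    choose t ht htcov using fun y : Y => h y (r / 2 ^ m) hrm
    refine ⟨s.biUnion t, ?_, ?_⟩
    · calc (s.biUnion t).card ≤ ∑ y ∈ s, (t y).card := Finset.card_biUnion_le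
        _ ≤ ∑ _y ∈ s, K := Finset.sum_le_sum fun y _ => ht y
        _ = s.card * K := by simp [Finset.sum_const, mul_comm]
        _ ≤ K ^ m * K := Nat.mul_le_mul_right K hs
        _ = K ^ (m + 1) := by ring
    · intro z hz
      obtain ⟨y, hy, hzy⟩ := mem_iUnion₂.1 (hcov hz)
      obtain ⟨w, hw, hzw⟩ := mem_iUnion₂.1 (htcov y hzy)
      refine mem_iUnion₂.2 ⟨w, Finset.mem_biUnion.2 ⟨y, hy, hw⟩, ?_⟩
      have e : r / 2 ^ m / 2 = r / 2 ^ (m + 1) := by ring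
      rwa [e] at hzw

theorem starry_no_snowflake_quasisymmetric_embedding'
    {X Y : Type*} [MetricSpace X] [MetricSpace Y]
    (hX : ∃ A η : ℝ, 1 < A ∧ 0 < η ∧ η < (A - 1) / 2 ∧
      ∀ n : ℕ, ∃ An : ℝ, A ≤ An ∧ ∃ ρ : ℝ, 0 < ρ ∧ ∃ x : Fin (n + 1) → X,
        (∀ i j : Fin (n + 1), i ≠ 0 → j ≠ 0 → i ≠ j →
          (An - η) * ρ ≤ dist (x i) (x j) ∧ dist (x i) (x j) ≤ An * ρ) ∧
        (∀ i : Fin (n + 1), i ≠ 0 → ρ ≤ dist (x 0) (x i) ∧ dist (x 0) (x i) ≤ (1 + η) * ρ))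
    (hY : ∃ K : ℕ, 0 < K ∧ ∀ (x : Y) (r : ℝ), 0 < r →
      ∃ s : Finset Y, s.card ≤ K ∧ closedBall x r ⊆ ⋃ y ∈ s, closedBall y (r / 2))
    (α : ℝ) (hα0 : 0 < α) (hα1 : α ≤ 1)
    (Ψ : ℝ → ℝ) (hΨ : (∀ t : ℝ, 0 < t → 0 < Ψ t) ∧ StrictMonoOn Ψ (Set.Ioi 0))
    (φ : X → Y) (hinj : Function.Injective φ) :
    ¬ ∀ x y z : X, x ≠ y → x ≠ z → y ≠ z →
        dist (φ x) (φ y) / dist (φ x) (φ z) ≤ Ψ (dist x y ^ α / dist x z ^ α) := by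
  obtain ⟨A, η, hA, hη, hη2, hstar⟩ := hX
  obtain ⟨K, hK, hdbl⟩ := hY
  intro h
  have hAη : (0:ℝ) < A - η := by linarith
  have h1η : (0:ℝ) < 1 + η := by linarith
  set C := Ψ ((1 + η) ^ α) with hCdef
  set M := Ψ (((1 + η) / (A - η)) ^ α) with hMdef
  have hargC : (0:ℝ) < (1 + η) ^ α := Real.rpow_pos_of_pos h1η α
  have hargM : (0:ℝ) < ((1 + η) / (A - η)) ^ α :=
    Real.rpow_pos_of_pos (by positivity) α
  have hCpos : 0 < C := hΨ.1 _ hargC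
  have hMpos : 0 < M := hΨ.1 _ hargM
  set C' := max C 1 with hC'def
  have h1C' : (1:ℝ) ≤ C' := le_max_right _ _
  have hC'pos : (0:ℝ) < C' := lt_of_lt_of_le one_pos h1C'
  have hCC' : C ≤ C' := le_max_left _ _
  obtain ⟨m, hm⟩ := pow_unbounded_of_one_lt (2 * C' ^ 2 * M) (by norm_num : (1:ℝ) < 2)
  set n := K ^ m + 1 with hndef
  obtain ⟨An, hAn, ρ, hρ, x, hx1, hx2⟩ := hstar n
  -- distinctness
  have hd0 : ∀ i : Fin (n+1), i ≠ 0 → (0:ℝ) < dist (x 0) (x i) :=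
    fun i hi => lt_of_lt_of_le hρ (hx2 i hi).1
  have hne0 : ∀ i : Fin (n+1), i ≠ 0 → x 0 ≠ x i :=
    fun i hi => dist_pos.1 (hd0 i hi)
  have hdij : ∀ i j : Fin (n+1), i ≠ 0 → j ≠ 0 → i ≠ j →
      (A - η) * ρ ≤ dist (x i) (x j) := by
    intro i j hi hj hij
    have := (hx1 i j hi hj hij).1
    nlinarith
  have hdijpos : ∀ i j : Fin (n+1), i ≠ 0 → j ≠ 0 → i ≠ j →
      (0:ℝ) < dist (x i) (x j) :=
    fun i j hi hj hij => lt_of_lt_of_le (by positivity) (hdij i j hi hj hij)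
  have hneij : ∀ i j : Fin (n+1), i ≠ 0 → j ≠ 0 → i ≠ j → x i ≠ x j :=
    fun i j hi hj hij => dist_pos.1 (hdijpos i j hi hj hij)
  have hφpos : ∀ {a b : X}, a ≠ b → 0 < dist (φ a) (φ b) :=
    fun {a b} hab => dist_pos.2 (fun e => hab (hinj e))
  have hρα : (0:ℝ) < ρ ^ α := Real.rpow_pos_of_pos hρ α
  -- argument bounds
  have harg1 : ∀ i j : Fin (n+1), i ≠ 0 → j ≠ 0 →
      dist (x 0) (x i) ^ α / dist (x 0) (x j) ^ α ≤ (1 + η) ^ α := by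
    intro i j hi hj
    have hnum : dist (x 0) (x i) ^ α ≤ ((1 + η) * ρ) ^ α :=
      Real.rpow_le_rpow dist_nonneg (hx2 i hi).2 hα0.le
    have hden : ρ ^ α ≤ dist (x 0) (x j) ^ α :=
      Real.rpow_le_rpow hρ.le (hx2 j hj).1 hα0.le
    calc dist (x 0) (x i) ^ α / dist (x 0) (x j) ^ α
        ≤ ((1 + η) * ρ) ^ α / ρ ^ α := by
          apply div_le_div₀ (by positivity) hnum hρα hden
      _ = (1 + η) ^ α := by
          rw [← Real.div_rpow (by positivity) hρ.le, mul_div_assoc, div_self hρ.ne', mul_one]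
  have harg2 : ∀ i j : Fin (n+1), i ≠ 0 → j ≠ 0 → i ≠ j →
      dist (x i) (x 0) ^ α / dist (x i) (x j) ^ α ≤ ((1 + η) / (A - η)) ^ α := by
    intro i j hi hj hij
    have hnum : dist (x i) (x 0) ^ α ≤ ((1 + η) * ρ) ^ α := by
      rw [dist_comm]
      exact Real.rpow_le_rpow dist_nonneg (hx2 i hi).2 hα0.le
    have hden : ((A - η) * ρ) ^ α ≤ dist (x i) (x j) ^ α :=
      Real.rpow_le_rpow (by positivity) (hdij i j hi hj hij) hα0.le
    calc dist (x i) (x 0) ^ α / dist (x i) (x j) ^ α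
        ≤ ((1 + η) * ρ) ^ α / ((A - η) * ρ) ^ α := by
          apply div_le_div₀ (by positivity) hnum (Real.rpow_pos_of_pos (by positivity) α) hden
      _ = ((1 + η) / (A - η)) ^ α := by
          rw [← Real.div_rpow (by positivity) (by positivity),
            mul_div_mul_right _ _ hρ.ne']
  have hargpos1 : ∀ i j : Fin (n+1), i ≠ 0 → j ≠ 0 →
      (0:ℝ) < dist (x 0) (x i) ^ α / dist (x 0) (x j) ^ α := fun i j hi hj => by
    have := hd0 i hi; have := hd0 j hj
    positivity
  -- the distinguished index
  have hn1 : 1 < n + 1 := by omega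
  set i₁ : Fin (n+1) := ⟨1, hn1⟩ with hi₁def
  have hi₁ : i₁ ≠ 0 := by
    intro e
    have : (1:ℕ) = 0 := congrArg Fin.val e
    omega
  set δ := dist (φ (x 0)) (φ (x i₁)) with hδdef
  have hδ : 0 < δ := hφpos (hne0 i₁ hi₁)
  -- claim 1: images of spokes at comparable distance from center
  have claim1 : ∀ i : Fin (n+1), i ≠ 0 → dist (φ (x 0)) (φ (x i)) ≤ C' * δ := by
    intro i hi
    by_cases hii : i = i₁
    · subst hii; nlinarith
    · have hq := h (x 0) (x i) (x i₁) (hne0 i hi) (hne0 i₁ hi₁) (hneij i i₁ hi hi₁ hii)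
      have hle : Ψ (dist (x 0) (x i) ^ α / dist (x 0) (x i₁) ^ α) ≤ C :=
        hΨ.2.monotoneOn (mem_Ioi.2 (hargpos1 i i₁ hi hi₁)) (mem_Ioi.2 hargC)
          (harg1 i i₁ hi hi₁)
      have := hq.trans hle
      rw [div_le_iff₀ hδ] at this
      nlinarith
  have claim1' : ∀ i : Fin (n+1), i ≠ 0 → δ ≤ C' * dist (φ (x 0)) (φ (x i)) := by
    intro i hi
    by_cases hii : i = i₁
    · subst hii; nlinarith
    · have hq := h (x 0) (x i₁) (x i) (hne0 i₁ hi₁) (hne0 i hi)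
        (hneij i₁ i hi₁ hi (fun e => hii e.symm))
      have hle : Ψ (dist (x 0) (x i₁) ^ α / dist (x 0) (x i) ^ α) ≤ C :=
        hΨ.2.monotoneOn (mem_Ioi.2 (hargpos1 i₁ i hi₁ hi)) (mem_Ioi.2 hargC)
          (harg1 i₁ i hi₁ hi)
      have := hq.trans hle
      rw [div_le_iff₀ (hφpos (hne0 i hi))] at this
      nlinarith [hφpos (hne0 i hi)]
  -- claim 2: separation of spoke images
  have claim2 : ∀ i j : Fin (n+1), i ≠ 0 → j ≠ 0 → i ≠ j →
      dist (φ (x 0)) (φ (x i)) ≤ M * dist (φ (x i)) (φ (x j)) := by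
    intro i j hi hj hij
    have hq := h (x i) (x 0) (x j) (hne0 i hi).symm (hneij i j hi hj hij)
      (hne0 j hj)
    have hargpos : (0:ℝ) < dist (x i) (x 0) ^ α / dist (x i) (x j) ^ α := by
      have h1 : (0:ℝ) < dist (x i) (x 0) := by rw [dist_comm]; exact hd0 i hi
      have h2 := hdijpos i j hi hj hij
      positivity
    have hle : Ψ (dist (x i) (x 0) ^ α / dist (x i) (x j) ^ α) ≤ M :=
      hΨ.2.monotoneOn (mem_Ioi.2 hargpos) (mem_Ioi.2 hargM) (harg2 i j hi hj hij)
    have := hq.trans hle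
    rw [div_le_iff₀ (hφpos (hneij i j hi hj hij))] at this
    rw [dist_comm (φ (x 0))]
    exact this
  have sep : ∀ i j : Fin (n+1), i ≠ 0 → j ≠ 0 → i ≠ j →
      δ / (C' * M) ≤ dist (φ (x i)) (φ (x j)) := by
    intro i j hi hj hij
    have h1 := claim1' i hi
    have h2 := claim2 i j hi hj hij
    rw [div_le_iff₀ (by positivity)]
    calc δ ≤ C' * dist (φ (x 0)) (φ (x i)) := h1
      _ ≤ C' * (M * dist (φ (x i)) (φ (x j))) :=
          mul_le_mul_of_nonneg_left h2 hC'pos.le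
      _ = dist (φ (x i)) (φ (x j)) * (C' * M) := by ring
  -- cover the ball around the center image
  have hRpos : (0:ℝ) < C' * δ := by positivity
  obtain ⟨s, hscard, hscov⟩ := my_doubling_iterate K hdbl m (φ (x 0)) (C' * δ) hRpos
  have hmem : ∀ k : Fin n, φ (x k.succ) ∈ closedBall (φ (x 0)) (C' * δ) := by
    intro k
    exact mem_closedBall'.2 (claim1 k.succ (Fin.succ_ne_zero k))
  choose g hg1 hg2 using fun k : Fin n => mem_iUnion₂.1 (hscov (hmem k))
  have hsmall : 2 * (C' * δ / 2 ^ m) < δ / (C' * M) := by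
    have e : 2 * (C' * δ / 2 ^ m) = 2 * C' * δ / 2 ^ m := by ring
    rw [e, div_lt_div_iff₀ (by positivity) (by positivity)]
    calc 2 * C' * δ * (C' * M) = δ * (2 * C' ^ 2 * M) := by ring
      _ < δ * 2 ^ m := mul_lt_mul_of_pos_left hm hδ
  have ginj : Function.Injective g := by
    intro k l hkl
    by_contra hne
    have hsucc : k.succ ≠ l.succ := fun e => hne (Fin.succ_injective _ e)
    have hb1 : dist (φ (x k.succ)) (g l) ≤ C' * δ / 2 ^ m := by
      rw [← hkl]; exact mem_closedBall.1 (hg2 k)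
    have hb2 : dist (g l) (φ (x l.succ)) ≤ C' * δ / 2 ^ m := by
      rw [dist_comm]; exact mem_closedBall.1 (hg2 l)
    have h1 : dist (φ (x k.succ)) (φ (x l.succ)) ≤ 2 * (C' * δ / 2 ^ m) := by
      calc dist (φ (x k.succ)) (φ (x l.succ))
          ≤ dist (φ (x k.succ)) (g l) + dist (g l) (φ (x l.succ)) := dist_triangle _ _ _
        _ ≤ 2 * (C' * δ / 2 ^ m) := by linarith
    have h2 := sep k.succ l.succ (Fin.succ_ne_zero k) (Fin.succ_ne_zero l) hsucc
    linarith
  have hcard : n ≤ s.card := by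
    have := Fintype.card_le_of_injective
      (fun k : Fin n => (⟨g k, hg1 k⟩ : {y // y ∈ s}))
      (fun k l e => ginj (Subtype.ext_iff.1 e))
    simpa using this
  omega

theorem starry_no_snowflake_quasisymmetric_embedding
    {X Y : Type*} [MetricSpace X] [MetricSpace Y]
    (hX : Starry X) (hY : DoublingSpace Y)
    (α : ℝ) (hα0 : 0 < α) (hα1 : α ≤ 1)
    (Ψ : ℝ → ℝ) (hΨ : IncreasingOnPos Ψ)
    (φ : X → Y) (hinj : Function.Injective φ) :
    ¬ ∀ x y z : X, x ≠ y → x ≠ z → y ≠ z →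
        dist (φ x) (φ y) / dist (φ x) (φ z) ≤ Ψ (dist x y ^ α / dist x z ^ α) :=
  starry_no_snowflake_quasisymmetric_embedding' hX hY α hα0 hα1 Ψ hΨ φ hinj
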